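/- Let V be an invertible real n×n matrix, λ : Fin n → ℝ, Λ = diagonal(λ), A = V·Λ·V⁻¹, and let Q be a real n×n matrix. Fix t₀ ∈ ℝ and an n×n matrix Σ₀, define Φ(t) = V·diag(e^{λ_i t}), and define Σ(t) = Φ(t) · ( Φ(t₀)⁻¹·Σ₀·(Φ(t₀)⁻¹)ᵀ + ∫_{t₀}^{t} Φ(τ)⁻¹·Q·(Φ(τ)⁻¹)ᵀ dτ ) · Φ(t)ᵀ. Then Σ(t₀) = Σ₀ and Σ′(t) = A·Σ(t) + Σ(t)·Aᵀ + Q for every t ∈ ℝ; that is, Σ solves the Lyapunov differential equation of the covariance of the linear SDE dX = A·X dt + dW with diffusion covariance Q. -/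

import Mathlib

open scoped Matrix

/-- Entrywise derivative of a triple matrix product. -/
lemma hasDerivAt_matrix_mul3 {n : ℕ} (f g h : ℝ → Matrix (Fin n) (Fin n) ℝ)
    (f' g' h' : Matrix (Fin n) (Fin n) ℝ) (t : ℝ)
    (hf : ∀ i j, HasDerivAt (fun s => f s i j) (f' i j) t)
    (hg : ∀ i j, HasDerivAt (fun s => g s i j) (g' i j) t)
    (hh : ∀ i j, HasDerivAt (fun s => h s i j) (h' i j) t) :
    ∀ i j, HasDerivAt (fun s => (f s * g s * h s) i j)
      ((f' * g t * h t + f t * g' * h t + f t * g t * h') i j) t := by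
  intro i j
  have key : ∀ s, (f s * g s * h s) i j = ∑ l, ∑ k, f s i k * g s k l * h s l j := by
    intro s
    simp [Matrix.mul_apply, Finset.sum_mul]
  have hd : HasDerivAt (fun s => ∑ l, ∑ k, f s i k * g s k l * h s l j)
      (∑ l, ∑ k, ((f' i k * g t k l + f t i k * g' k l) * h t l j
        + f t i k * g t k l * h' l j)) t :=
    HasDerivAt.fun_sum fun l _ => HasDerivAt.fun_sum fun k _ =>
      (((hf i k).fun_mul (hg k l)).fun_mul (hh l j))
  have e1 : (f' * g t * h t) i j = ∑ l, ∑ k, f' i k * g t k l * h t l j := by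
    simp [Matrix.mul_apply, Finset.sum_mul]
  have e2 : (f t * g' * h t) i j = ∑ l, ∑ k, f t i k * g' k l * h t l j := by
    simp [Matrix.mul_apply, Finset.sum_mul]
  have e3 : (f t * g t * h') i j = ∑ l, ∑ k, f t i k * g t k l * h' l j := by
    simp [Matrix.mul_apply, Finset.sum_mul]
  have target_eq : (f' * g t * h t + f t * g' * h t + f t * g t * h') i j
      = ∑ l, ∑ k, ((f' i k * g t k l + f t i k * g' k l) * h t l j
        + f t i k * g t k l * h' l j) := by
    rw [Matrix.add_apply, Matrix.add_apply, e1, e2, e3, ← Finset.sum_add_distrib,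
      ← Finset.sum_add_distrib]
    refine Finset.sum_congr rfl fun l _ => ?_
    rw [← Finset.sum_add_distrib, ← Finset.sum_add_distrib]
    refine Finset.sum_congr rfl fun k _ => ?_
    ring
  have hfun : (fun s => (f s * g s * h s) i j)
      = fun s => ∑ l, ∑ k, f s i k * g s k l * h s l j := funext key
  rw [hfun, target_eq]
  exact hd

/-- For `A = V·Λ·V⁻¹` and `Φ(t) = V·diag(e^{λᵢt})`,
`Σ(t) = Φ(t)·(Φ(t₀)⁻¹·Sigma₀·(Φ(t₀)⁻¹)ᵀ + ∫_{t₀}^t Φ(τ)⁻¹·Q·(Φ(τ)⁻¹)ᵀ dτ)·Φ(t)ᵀ`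
satisfies `Σ(t₀) = Sigma₀` and the Lyapunov ODE `Σ′(t) = A·Σ(t) + Σ(t)·Aᵀ + Q` (entrywise). -/
theorem covariance_lyapunov_solution (n : ℕ) (V : Matrix (Fin n) (Fin n) ℝ)
    (hV : IsUnit V.det) (lam : Fin n → ℝ) (Q : Matrix (Fin n) (Fin n) ℝ)
    (t₀ : ℝ) (Sigma₀ : Matrix (Fin n) (Fin n) ℝ)
    (A : Matrix (Fin n) (Fin n) ℝ) (hA : A = V * Matrix.diagonal lam * V⁻¹)
    (Φ : ℝ → Matrix (Fin n) (Fin n) ℝ)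
    (hΦ : ∀ t, Φ t = V * Matrix.diagonal fun i => Real.exp (lam i * t))
    (S : ℝ → Matrix (Fin n) (Fin n) ℝ)
    (hS : ∀ t, S t =
      Φ t * ((Φ t₀)⁻¹ * Sigma₀ * ((Φ t₀)⁻¹)ᵀ +
        Matrix.of fun i j => ∫ τ in t₀..t, ((Φ τ)⁻¹ * Q * ((Φ τ)⁻¹)ᵀ) i j) * (Φ t)ᵀ) :
    S t₀ = Sigma₀ ∧ ∀ t i j, HasDerivAt (fun s => S s i j) ((A * S t + S t * Aᵀ + Q) i j) t := by
  -- the explicit right inverse of Φ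
  set Dinv : ℝ → Matrix (Fin n) (Fin n) ℝ :=
    fun t => Matrix.diagonal fun i => Real.exp (-(lam i * t)) with hDinv
  have hright : ∀ t, Φ t * (Dinv t * V⁻¹) = 1 := by
    intro t
    rw [hΦ, hDinv]
    rw [Matrix.mul_assoc, ← Matrix.mul_assoc (Matrix.diagonal _),
      Matrix.diagonal_mul_diagonal]
    simp [← Real.exp_add, Matrix.mul_nonsing_inv V hV]
  have hdet : ∀ t, IsUnit (Φ t).det := fun t =>
    Matrix.isUnit_det_of_right_inverse (hright t)
  have hΦinv : ∀ t, (Φ t)⁻¹ = Dinv t * V⁻¹ := fun t =>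
    Matrix.inv_eq_right_inv (hright t)
  -- conjugation lemma
  have hconj : ∀ t (X : Matrix (Fin n) (Fin n) ℝ),
      Φ t * ((Φ t)⁻¹ * X * ((Φ t)⁻¹)ᵀ) * (Φ t)ᵀ = X := by
    intro t X
    have h1 : Φ t * (Φ t)⁻¹ = 1 := Matrix.mul_nonsing_inv _ (hdet t)
    have h2 : ((Φ t)⁻¹)ᵀ * (Φ t)ᵀ = 1 := by
      rw [Matrix.transpose_nonsing_inv]
      exact Matrix.nonsing_inv_mul _ (by simpa [Matrix.det_transpose] using hdet t)
    calc Φ t * ((Φ t)⁻¹ * X * ((Φ t)⁻¹)ᵀ) * (Φ t)ᵀ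
        = (Φ t * (Φ t)⁻¹) * X * (((Φ t)⁻¹)ᵀ * (Φ t)ᵀ) := by
          simp only [Matrix.mul_assoc]
      _ = X := by rw [h1, h2]; simp
  constructor
  · rw [hS t₀]
    have : (Matrix.of fun i j => ∫ τ in t₀..t₀, ((Φ τ)⁻¹ * Q * ((Φ τ)⁻¹)ᵀ) i j)
        = (0 : Matrix (Fin n) (Fin n) ℝ) := by
      ext i j; simp [intervalIntegral.integral_same]
    rw [this, add_zero, hconj]
  · intro t i j
    -- A * Φ t
    have hAΦ : ∀ t, A * Φ t = V * Matrix.diagonal fun i => lam i * Real.exp (lam i * t) := by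
      intro t
      rw [hA, hΦ, Matrix.mul_assoc (V * Matrix.diagonal lam), ← Matrix.mul_assoc V⁻¹,
        Matrix.nonsing_inv_mul V hV, Matrix.one_mul, Matrix.mul_assoc,
        Matrix.diagonal_mul_diagonal]
    -- entrywise derivative of Φ
    have hΦ' : ∀ u i k, HasDerivAt (fun s => Φ s i k) ((A * Φ u) i k) u := by
      intro u i k
      have hexp : HasDerivAt (fun s => Real.exp (lam k * s)) (lam k * Real.exp (lam k * u)) u := by
        have h := ((hasDerivAt_id u).const_mul (lam k)).exp
        simpa [mul_comm] using h
      have := hexp.const_mul (V i k)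
      have hfun : (fun s => Φ s i k) = fun s => V i k * Real.exp (lam k * s) := by
        funext s; rw [hΦ s, Matrix.mul_diagonal]
      rw [hfun, hAΦ u, Matrix.mul_diagonal]
      convert this using 1
    -- the integrand in closed form
    set R : Matrix (Fin n) (Fin n) ℝ := V⁻¹ * Q * (V⁻¹)ᵀ with hR
    have hFmat : ∀ τ, (Φ τ)⁻¹ * Q * ((Φ τ)⁻¹)ᵀ = Dinv τ * R * Dinv τ := by
      intro τ
      rw [hΦinv τ, hR, Matrix.transpose_mul]
      simp [hDinv, Matrix.diagonal_transpose, Matrix.mul_assoc]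
    have hFentry : ∀ τ k l, ((Φ τ)⁻¹ * Q * ((Φ τ)⁻¹)ᵀ) k l
        = Real.exp (-(lam k * τ)) * R k l * Real.exp (-(lam l * τ)) := by
      intro τ k l
      rw [hFmat τ, hDinv]
      simp [Matrix.diagonal_mul, Matrix.mul_diagonal]
    -- FTC for the integral entries
    have hG : ∀ k l, HasDerivAt (fun s => ∫ τ in t₀..s, ((Φ τ)⁻¹ * Q * ((Φ τ)⁻¹)ᵀ) k l)
        (((Φ t)⁻¹ * Q * ((Φ t)⁻¹)ᵀ) k l) t := by
      intro k l
      have hcont : Continuous fun τ => ((Φ τ)⁻¹ * Q * ((Φ τ)⁻¹)ᵀ) k l := by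
        simp only [hFentry]
        fun_prop
      exact intervalIntegral.integral_hasDerivAt_right
        (hcont.intervalIntegrable t₀ t)
        hcont.stronglyMeasurable.stronglyMeasurableAtFilter
        hcont.continuousAt
    -- the middle factor
    set C : Matrix (Fin n) (Fin n) ℝ := (Φ t₀)⁻¹ * Sigma₀ * ((Φ t₀)⁻¹)ᵀ with hC
    set Mf : ℝ → Matrix (Fin n) (Fin n) ℝ :=
      fun s => C + Matrix.of fun i j => ∫ τ in t₀..s, ((Φ τ)⁻¹ * Q * ((Φ τ)⁻¹)ᵀ) i j with hMf
    have hM' : ∀ k l, HasDerivAt (fun s => Mf s k l)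
        (((Φ t)⁻¹ * Q * ((Φ t)⁻¹)ᵀ) k l) t := by
      intro k l
      have := (hasDerivAt_const t (C k l)).fun_add (hG k l)
      simpa [hMf, Matrix.add_apply] using this
    have hhT : ∀ l j, HasDerivAt (fun s => (Φ s)ᵀ l j) (((A * Φ t)ᵀ) l j) t := by
      intro l j
      simpa [Matrix.transpose_apply] using hΦ' t j l
    have hmain := hasDerivAt_matrix_mul3 Φ Mf (fun s => (Φ s)ᵀ)
      (A * Φ t) ((Φ t)⁻¹ * Q * ((Φ t)⁻¹)ᵀ) ((A * Φ t)ᵀ) t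
      (hΦ' t) hM' hhT i j
    have hSfun : (fun s => S s i j) = fun s => (Φ s * Mf s * (Φ s)ᵀ) i j := by
      funext s; rw [hS s]
    have hval : (A * S t + S t * Aᵀ + Q) i j
        = (A * Φ t * Mf t * (Φ t)ᵀ + Φ t * ((Φ t)⁻¹ * Q * ((Φ t)⁻¹)ᵀ) * (Φ t)ᵀ
          + Φ t * Mf t * (A * Φ t)ᵀ) i j := by
      have hSt : S t = Φ t * Mf t * (Φ t)ᵀ := hS t
      have hQ : Φ t * ((Φ t)⁻¹ * Q * ((Φ t)⁻¹)ᵀ) * (Φ t)ᵀ = Q := hconj t Q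
      rw [hSt, hQ, Matrix.transpose_mul]
      simp only [Matrix.mul_assoc]
      rw [add_right_comm]
    rw [hSfun, hval]
    exact hmain
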